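/- Let J be the T_G-ideal (graded ideal closed under graded endomorphisms of the free graded algebra) generated by: (1) x_1 x_2 - x_2 x_1 with deg x_1 = deg x_2 = e; (2) x_1 x_3 x_2 - x_2 x_3 x_1 with e != deg x_1 = deg x_2 = (deg x_3)^{-1}; (3) all variables x of degree h with (M_n(K))_h = 0. If m and n are graded monomials in variables x_1,...,x_p such that the generic-matrix evaluations m(A_1,...,A_p) and n(A_1,...,A_p) share the same nonzero entry in the same position, then m is congruent to n modulo J. -/

import Mathlib

/-- The free `G`-graded associative algebra `K⟨X⟩` on the variables `x_{h,i}` (`h ∈ G`,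
`i ∈ ℕ`, the variable `x_{h,i}` having degree `h`), realized as the monoid algebra of the
free monoid on `G × ℕ`. -/
abbrev FreeGr (K : Type*) (G : Type*) [Field K] := MonoidAlgebra K (FreeMonoid (G × ℕ))

/-- The homogeneous component of degree `h` of `K⟨X⟩`: the span of the monomials whose
degrees multiply to `h`. -/
noncomputable def homComp (K : Type*) [Field K] {G : Type*} [Group G] (h : G) :
    Submodule K (FreeGr K G) :=
  Submodule.span K {x | ∃ w : FreeMonoid (G × ℕ),
    FreeMonoid.lift (fun p : G × ℕ => p.1) w = h ∧
    x = MonoidAlgebra.of K (FreeMonoid (G × ℕ)) w}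

/-- The two-sided ideal of `K⟨X⟩` generated by a set `S` (as a `K`-subspace spanned by the
products `u * s * v`). -/
noncomputable def idealSpan {K : Type*} [Field K] {G : Type*} [Group G] (S : Set (FreeGr K G)) :
    Submodule K (FreeGr K G) :=
  Submodule.span K {x | ∃ u s v : FreeGr K G, s ∈ S ∧ x = u * s * v}

/-- Homogeneous component of degree `h` of the elementary `G`-grading of `Mₙ(K)`
induced by `g : Fin n → G`. -/
def elemComp (K : Type*) [Field K] {G : Type*} [Group G] {n : ℕ} (g : Fin n → G) (h : G) :
    Submodule K (Matrix (Fin n) (Fin n) K) :=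
  Submodule.span K {M | ∃ i j : Fin n, (g i)⁻¹ * g j = h ∧ M = Matrix.single i j 1}

/-- All graded substitution instances of the identity `x₁x₂ - x₂x₁`, `deg x₁ = deg x₂ = ε`. -/
def genSet1 (K : Type*) [Field K] (G : Type*) [Group G] : Set (FreeGr K G) :=
  {x | ∃ a b : FreeGr K G, a ∈ homComp K (1 : G) ∧ b ∈ homComp K (1 : G) ∧
    x = a * b - b * a}

/-- All graded substitution instances of the identity `x₁x₃x₂ - x₂x₃x₁`, with
`ε ≠ deg x₁ = deg x₂ = (deg x₃)⁻¹`. -/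
def genSet2 (K : Type*) [Field K] (G : Type*) [Group G] : Set (FreeGr K G) :=
  {x | ∃ (h : G) (a b c : FreeGr K G), h ≠ 1 ∧ a ∈ homComp K h ∧ b ∈ homComp K h ∧
    c ∈ homComp K h⁻¹ ∧ x = a * c * b - b * c * a}

/-- All graded substitution instances of the identities `x = 0` for variables `x` of degree
`h` with `(Mₙ(K))_h = 0`: the homogeneous elements of such degrees `h`. -/
def genSet3 (K : Type*) [Field K] {G : Type*} [Group G] {n : ℕ} (g : Fin n → G) :
    Set (FreeGr K G) :=
  {x | ∃ h : G, elemComp K g h = ⊥ ∧ x ∈ homComp K h}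

/-- The generic matrix `A_i^{(h)}` over `Ω = K[Y]`. -/
noncomputable def genMat {K : Type*} [Field K] {G : Type*} [Group G] [DecidableEq G] {n : ℕ}
    (g : Fin n → G) (h : G) (i : ℕ) :
    Matrix (Fin n) (Fin n) (MvPolynomial (G × ℕ × Fin n) K) :=
  Matrix.of fun k l => if g k * h = g l then MvPolynomial.X (h, i, k) else 0

/-- Evaluation of a graded monomial (word) at the generic matrices. -/
noncomputable def evalWord (K : Type*) [Field K] {G : Type*} [Group G] [DecidableEq G] {n : ℕ}
    (g : Fin n → G) (w : FreeMonoid (G × ℕ)) :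
    Matrix (Fin n) (Fin n) (MvPolynomial (G × ℕ × Fin n) K) :=
  (w.toList.map fun p => genMat (K := K) g p.1 p.2).prod

/-!
Since `g` is injective, reading a word `w` from a node `k` determines a walk on `Fin n` (a letter
of degree `h` leads from `j` to the unique `j'` with `g j * h = g j'`), and the `(k, l)` entry of
`w(A)` is either `0` or the product of the variables `y^j_{h,i}` recorded along that walk. So two
monomials with the same nonzero entry read walks from `k` to `l` with the same multiset of steps.

Such words are congruent modulo the ideal generated by (1) and (2) alone, by induction on their
length. If the first letters `a ≠ b` differ, the step `a` at `k` occurs in the walk of `b ⋯` as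
`u a v` with `u` closed at `k`. If `v = v₁ v₂` with `a v₁` closed at `k`, the closed walks `u` and
`a v₁` have degree `ε` and commute by (1). Otherwise the walk of `a ⋯` returns from the end of `a`
to `k` using steps of `u` and `v` only, hence passes from `v` into `u` at a node `q ≠ k`; writing
`u = u₁ u₂` and `v = v₁ v₂` through `q`, identity (2) turns `u₁ u₂ (a v₁)` into `(a v₁) u₂ u₁`.
-/

section FreeAlgebra

variable {K : Type*} [Field K] {G : Type*}

variable (K) in
noncomputable def ofWord (w : List (G × ℕ)) : FreeGr K G :=
  MonoidAlgebra.of K (FreeMonoid (G × ℕ)) (FreeMonoid.ofList w)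

theorem ofWord_append (u v : List (G × ℕ)) : ofWord K (u ++ v) = ofWord K u * ofWord K v :=
  map_mul _ _ _

variable [Group G]

def wordDeg (w : List (G × ℕ)) : G := (w.map Prod.fst).prod

@[simp] theorem wordDeg_nil : wordDeg ([] : List (G × ℕ)) = 1 := rfl

@[simp] theorem wordDeg_cons (p : G × ℕ) (w : List (G × ℕ)) :
    wordDeg (p :: w) = p.1 * wordDeg w := by
  simp [wordDeg]

theorem ofWord_mem_homComp (w : List (G × ℕ)) : ofWord K w ∈ homComp K (wordDeg w) :=
  Submodule.subset_span ⟨FreeMonoid.ofList w, by rw [FreeMonoid.lift_apply]; rfl, rfl⟩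

theorem idealSpan_mono {S T : Set (FreeGr K G)} (h : S ⊆ T) : idealSpan S ≤ idealSpan T :=
  Submodule.span_mono fun _ ⟨u, s, v, hs, hx⟩ => ⟨u, s, v, h hs, hx⟩

theorem mem_idealSpan_of_mem {S : Set (FreeGr K G)} {s : FreeGr K G} (hs : s ∈ S) :
    s ∈ idealSpan S :=
  Submodule.subset_span ⟨1, s, 1, hs, by rw [one_mul, mul_one]⟩

theorem mul_mul_mem_idealSpan {S : Set (FreeGr K G)} {x : FreeGr K G} (hx : x ∈ idealSpan S)
    (a b : FreeGr K G) : a * x * b ∈ idealSpan S := by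
  induction hx using Submodule.span_induction with
  | mem y hy =>
    obtain ⟨u, s, v, hs, rfl⟩ := hy
    exact Submodule.subset_span ⟨a * u, s, v * b, hs, by simp only [mul_assoc]⟩
  | zero => simp
  | add y z _ _ hy hz => simpa [mul_add, add_mul] using Submodule.add_mem _ hy hz
  | smul c y _ hy => simpa [mul_smul_comm, smul_mul_assoc] using Submodule.smul_mem _ c hy

theorem ofWord_append_append_sub_mem {S : Set (FreeGr K G)} {y z : List (G × ℕ)}
    (h : ofWord K y - ofWord K z ∈ idealSpan S) (x w : List (G × ℕ)) :
    ofWord K (x ++ y ++ w) - ofWord K (x ++ z ++ w) ∈ idealSpan S := by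
  simpa only [ofWord_append, mul_sub, sub_mul] using
    mul_mul_mem_idealSpan h (ofWord K x) (ofWord K w)

theorem ofWord_append_comm_sub_mem {x y : List (G × ℕ)} (hx : wordDeg x = 1)
    (hy : wordDeg y = 1) :
    ofWord K (x ++ y) - ofWord K (y ++ x) ∈ idealSpan (genSet1 K G ∪ genSet2 K G) := by
  rw [ofWord_append, ofWord_append]
  exact mem_idealSpan_of_mem <| Or.inl
    ⟨_, _, hx ▸ ofWord_mem_homComp x, hy ▸ ofWord_mem_homComp y, rfl⟩

theorem ofWord_swap_ends_sub_mem {A B C : List (G × ℕ)} {h : G} (hh : h ≠ 1)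
    (hA : wordDeg A = h) (hB : wordDeg B = h) (hC : wordDeg C = h⁻¹) :
    ofWord K (A ++ C ++ B) - ofWord K (B ++ C ++ A) ∈ idealSpan (genSet1 K G ∪ genSet2 K G) := by
  simp only [ofWord_append]
  exact mem_idealSpan_of_mem <| Or.inr ⟨h, _, _, _, hh, hA ▸ ofWord_mem_homComp A,
    hB ▸ ofWord_mem_homComp B, hC ▸ ofWord_mem_homComp C, rfl⟩

end FreeAlgebra

section Walks

variable {G : Type*} [Group G] {n : ℕ} {g : Fin n → G}

/-- The multiset `s` records, for each letter `(h, i)` read at node `j`, the variable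
`y^j_{h,i}` (the `(j, j')` entry of `A_i^{(h)}`). -/
inductive IsWalk (g : Fin n → G) :
    Fin n → List (G × ℕ) → Fin n → Multiset (G × ℕ × Fin n) → Prop
  | nil (k : Fin n) : IsWalk g k [] k 0
  | cons {k j l : Fin n} {p : G × ℕ} {w : List (G × ℕ)} {s : Multiset (G × ℕ × Fin n)} :
      g k * p.1 = g j → IsWalk g j w l s → IsWalk g k (p :: w) l ((p.1, p.2, k) ::ₘ s)

def PassesThrough (g : Fin n → G) (k : Fin n) (w : List (G × ℕ)) (l : Fin n)
    (s : Multiset (G × ℕ × Fin n)) (q : Fin n) : Prop :=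
  ∃ w₁ w₂ s₁ s₂, w = w₁ ++ w₂ ∧ IsWalk g k w₁ q s₁ ∧ IsWalk g q w₂ l s₂ ∧ s = s₁ + s₂

namespace IsWalk

variable {k j l : Fin n} {p : G × ℕ} {u v w : List (G × ℕ)} {s su sv : Multiset (G × ℕ × Fin n)}

theorem of_cons (h : IsWalk g k (p :: w) l s) :
    ∃ j t, g k * p.1 = g j ∧ IsWalk g j w l t ∧ s = (p.1, p.2, k) ::ₘ t := by
  cases h
  exact ⟨_, _, ‹_›, ‹_›, rfl⟩

theorem append (hu : IsWalk g k u j su) (hv : IsWalk g j v l sv) :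
    IsWalk g k (u ++ v) l (su + sv) := by
  induction hu with
  | nil => simpa using hv
  | cons hk _ ih => simpa [Multiset.cons_add] using cons hk (ih hv)

theorem card_eq (h : IsWalk g k w l s) : Multiset.card s = w.length := by
  induction h with
  | nil => rfl
  | cons _ _ ih => simp [ih]

theorem wordDeg_eq (h : IsWalk g k w l s) : wordDeg w = (g k)⁻¹ * g l := by
  induction h with
  | nil => simp
  | cons hk _ ih => rw [wordDeg_cons, ih, ← hk]; group

theorem exists_split_of_mem (h : IsWalk g k w l s) {e : G × ℕ × Fin n} (he : e ∈ s) :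
    ∃ u v j su sv, w = u ++ (e.1, e.2.1) :: v ∧ IsWalk g k u e.2.2 su ∧
      g e.2.2 * e.1 = g j ∧ IsWalk g j v l sv ∧ s = su + e ::ₘ sv := by
  induction h with
  | nil => simp at he
  | @cons k j l p w s hk hw ih =>
    rcases Multiset.mem_cons.1 he with rfl | he
    · exact ⟨[], w, j, 0, s, rfl, nil k, hk, hw, by simp⟩
    · obtain ⟨u, v, j', su, sv, rfl, hu, hj', hv, rfl⟩ := ih he
      exact ⟨p :: u, v, j', _, sv, rfl, cons hk hu, hj', hv, (Multiset.cons_add _ _ _).symm⟩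

theorem passesThrough_start (h : IsWalk g k w l s) : PassesThrough g k w l s k :=
  ⟨[], w, 0, s, rfl, nil k, h, by simp⟩

theorem passesThrough_of_mem (h : IsWalk g k w l s) {e : G × ℕ × Fin n} (he : e ∈ s) :
    ∃ j, g e.2.2 * e.1 = g j ∧ PassesThrough g k w l s e.2.2 ∧ PassesThrough g k w l s j := by
  obtain ⟨u, v, j, su, sv, rfl, hu, hj, hv, rfl⟩ := h.exists_split_of_mem he
  refine ⟨j, hj, ⟨u, _, su, _, rfl, hu, cons hj hv, rfl⟩,
    ⟨u ++ [(e.1, e.2.1)], v, su + {e}, sv, by simp, hu.append (cons hj (nil j)), hv, ?_⟩⟩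
  simp [Multiset.singleton_add, add_assoc]

theorem exists_exit {P : Fin n → Prop} (h : IsWalk g k w l s) (hk : P k) (hl : ¬P l) :
    ∃ e ∈ s, ∃ j, g e.2.2 * e.1 = g j ∧ P e.2.2 ∧ ¬P j := by
  induction h with
  | nil => exact absurd hk hl
  | @cons k j l p w s hkj _ ih =>
    by_cases hj : P j
    · obtain ⟨e, he, j', hj', hPe, hPj'⟩ := ih hj hl
      exact ⟨e, Multiset.mem_cons_of_mem he, j', hj', hPe, hPj'⟩
    · exact ⟨_, Multiset.mem_cons_self _ _, j, hkj, hk, hj⟩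

end IsWalk

theorem exists_common_node (hg : Function.Injective g) {k k' l : Fin n} {a : G × ℕ}
    {u v r : List (G × ℕ)} {su sv t : Multiset (G × ℕ × Fin n)}
    (hu : IsWalk g k u k su) (hv : IsWalk g k' v l sv) (hr : IsWalk g k' r k t)
    (ht : t ≤ su + (a.1, a.2, k) ::ₘ sv) (hvk : ¬PassesThrough g k' v l sv k) :
    ∃ q ≠ k, PassesThrough g k u k su q ∧ PassesThrough g k' v l sv q := by
  obtain ⟨e, he, j, hej, hve, hvj⟩ := hr.exists_exit hv.passesThrough_start hvk
  have hek : e.2.2 ≠ k := fun h => hvk (h ▸ hve)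
  rcases Multiset.mem_add.1 (Multiset.mem_of_le ht he) with he | he
  · exact ⟨e.2.2, hek, (hu.passesThrough_of_mem he).choose_spec.2.1, hve⟩
  rcases Multiset.mem_cons.1 he with rfl | he
  · exact absurd rfl hek
  obtain ⟨j', hej', -, hvj'⟩ := hv.passesThrough_of_mem he
  exact absurd (hg (hej'.symm.trans hej) ▸ hvj') hvj

end Walks

section Rewriting

variable {K : Type*} [Field K] {G : Type*} [Group G] {n : ℕ} {g : Fin n → G} {k l : Fin n}

theorem IsWalk.ofWord_append_comm_sub_mem {x y : List (G × ℕ)}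
    {sx sy : Multiset (G × ℕ × Fin n)} (hx : IsWalk g k x k sx) (hy : IsWalk g k y k sy)
    (z : List (G × ℕ)) :
    ofWord K (x ++ y ++ z) - ofWord K (y ++ x ++ z) ∈ idealSpan (genSet1 K G ∪ genSet2 K G) :=
  ofWord_append_append_sub_mem (_root_.ofWord_append_comm_sub_mem
    (hx.wordDeg_eq.trans (inv_mul_cancel _)) (hy.wordDeg_eq.trans (inv_mul_cancel _))) [] z

theorem IsWalk.ofWord_swap_ends_sub_mem (hg : Function.Injective g) {q : Fin n}
    {A B C : List (G × ℕ)} {sA sB sC : Multiset (G × ℕ × Fin n)} (hA : IsWalk g k A q sA)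
    (hC : IsWalk g q C k sC) (hB : IsWalk g k B q sB) (hqk : q ≠ k) (z : List (G × ℕ)) :
    ofWord K (A ++ C ++ B ++ z) - ofWord K (B ++ C ++ A ++ z) ∈
      idealSpan (genSet1 K G ∪ genSet2 K G) := by
  have hne : (g k)⁻¹ * g q ≠ 1 := fun h => hqk (hg (inv_mul_eq_one.1 h).symm)
  have h := _root_.ofWord_swap_ends_sub_mem (K := K) hne hA.wordDeg_eq hB.wordDeg_eq
    (by rw [hC.wordDeg_eq, mul_inv_rev, inv_inv])
  exact ofWord_append_append_sub_mem h [] z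

theorem IsWalk.exists_cons_sub_mem (hg : Function.Injective g) {a b : G × ℕ} (hab : a ≠ b)
    {m w : List (G × ℕ)} {s : Multiset (G × ℕ × Fin n)}
    (hm : IsWalk g k (a :: m) l s) (hw : IsWalk g k (b :: w) l s) :
    ∃ w', IsWalk g k (a :: w') l s ∧
      ofWord K (b :: w) - ofWord K (a :: w') ∈ idealSpan (genSet1 K G ∪ genSet2 K G) := by
  obtain ⟨k', sm, ha, hm', rfl⟩ := hm.of_cons
  obtain ⟨u, v, k'', su, sv, hsplit, hu, ha', hv, hs⟩ :=
    hw.exists_split_of_mem (Multiset.mem_cons_self _ _)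
  obtain rfl : k' = k'' := hg (ha.symm.trans ha')
  rw [hsplit, hs]
  by_cases hvk : PassesThrough g k' v l sv k
  · obtain ⟨v₁, v₂, t₁, t₂, rfl, hv₁, hv₂, rfl⟩ := hvk
    refine ⟨v₁ ++ u ++ v₂, ?_, ?_⟩
    · convert cons ha ((hv₁.append hu).append hv₂) using 1
      simp only [Multiset.add_cons, Multiset.cons_inj_right]
      abel
    · simpa using hu.ofWord_append_comm_sub_mem (K := K) (cons ha hv₁) v₂
  · have hb : (b.1, b.2, k) ∈ sm := by
      obtain ⟨_, _, _, _, hbs⟩ := hw.of_cons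
      have hb' : (b.1, b.2, k) ∈ (a.1, a.2, k) ::ₘ sm := by
        rw [hbs]; exact Multiset.mem_cons_self _ _
      refine (Multiset.mem_cons.1 hb').resolve_left fun h => hab ?_
      simp only [Prod.mk.injEq] at h
      exact Prod.ext h.1.symm h.2.1.symm
    obtain ⟨r, _, _, sr, _, -, hr, -, -, rfl⟩ := hm'.exists_split_of_mem hb
    obtain ⟨q, hqk, ⟨u₁, u₂, t₁, t₂, rfl, hu₁, hu₂, rfl⟩, ⟨v₁, v₂, t₃, t₄, rfl, hv₁, hv₂, rfl⟩⟩ :=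
      exists_common_node hg hu hv hr
        (hs ▸ (Multiset.le_add_right _ _).trans (Multiset.le_cons_self _ _)) hvk
    refine ⟨v₁ ++ u₂ ++ u₁ ++ v₂, ?_, ?_⟩
    · convert cons ha (((hv₁.append hu₂).append hu₁).append hv₂) using 1
      simp only [Multiset.add_cons, Multiset.cons_inj_right]
      abel
    · simpa using hu₁.ofWord_swap_ends_sub_mem (K := K) hg hu₂ (cons ha hv₁) hqk v₂

theorem IsWalk.ofWord_sub_mem (hg : Function.Injective g) {m w : List (G × ℕ)}
    {s : Multiset (G × ℕ × Fin n)} (hm : IsWalk g k m l s) (hw : IsWalk g k w l s) :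
    ofWord K m - ofWord K w ∈ idealSpan (genSet1 K G ∪ genSet2 K G) := by
  have hlen : w.length = m.length := hw.card_eq.symm.trans hm.card_eq
  induction m generalizing k w s with
  | nil => simp [List.length_eq_zero_iff.1 hlen]
  | cons a m ih =>
    obtain ⟨b, w, rfl⟩ := List.exists_cons_of_length_eq_add_one hlen
    obtain ⟨w', hw', hbw'⟩ : ∃ w', IsWalk g k (a :: w') l s ∧
        ofWord K (b :: w) - ofWord K (a :: w') ∈ idealSpan (genSet1 K G ∪ genSet2 K G) := by
      by_cases hab : a = b
      · exact ⟨w, hab ▸ hw, by simp [hab]⟩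
      · exact hm.exists_cons_sub_mem hg hab hw
    obtain ⟨j, sm, ha, hm, rfl⟩ := hm.of_cons
    obtain ⟨j', sw, ha', hw', hs⟩ := hw'.of_cons
    obtain rfl := hg (ha'.symm.trans ha)
    obtain rfl := (Multiset.cons_inj_right _).1 hs
    have ham := ofWord_append_append_sub_mem
      (ih hm hw' (hw'.card_eq.symm.trans hm.card_eq)) [a] []
    simpa using Submodule.sub_mem _ ham hbw'

end Rewriting

section Evaluation

variable {K : Type*} [Field K] {G : Type*} [Group G] [DecidableEq G] {n : ℕ} {g : Fin n → G}
  {k l : Fin n} {w : List (G × ℕ)}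

theorem evalWord_ofList_cons (p : G × ℕ) (w : List (G × ℕ)) :
    evalWord K g (FreeMonoid.ofList (p :: w)) =
      genMat g p.1 p.2 * evalWord K g (FreeMonoid.ofList w) := by
  simp [evalWord]

theorem IsWalk.evalWord_apply (hg : Function.Injective g) {s : Multiset (G × ℕ × Fin n)}
    (h : IsWalk g k w l s) :
    evalWord K g (FreeMonoid.ofList w) k l = MvPolynomial.monomial (Multiset.toFinsupp s) 1 := by
  induction h with
  | nil k => simp [evalWord]
  | @cons k j l p w s hkj _ ih =>
    rw [evalWord_ofList_cons, Matrix.mul_apply, Finset.sum_eq_single j, ih]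
    · rw [← Multiset.singleton_add, Multiset.toFinsupp_add, Multiset.toFinsupp_singleton]
      simp [genMat, hkj, MvPolynomial.X, MvPolynomial.monomial_mul]
    · intro j' _ hj'
      have : g k * p.1 ≠ g j' := fun h => hj' (hg (h.symm.trans hkj))
      simp [genMat, this]
    · simp

theorem exists_isWalk_of_evalWord_apply_ne_zero
    (h : evalWord K g (FreeMonoid.ofList w) k l ≠ 0) : ∃ s, IsWalk g k w l s := by
  induction w generalizing k with
  | nil =>
    obtain rfl : k = l := by
      by_contra hkl
      exact h (Matrix.one_apply_ne hkl)
    exact ⟨0, .nil k⟩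
  | cons p w ih =>
    rw [evalWord_ofList_cons, Matrix.mul_apply] at h
    obtain ⟨j, -, hj⟩ := Finset.exists_ne_zero_of_sum_ne_zero h
    have hkj : g k * p.1 = g j := by
      by_contra hkj
      exact left_ne_zero_of_mul hj (by simp [genMat, hkj])
    obtain ⟨s, hs⟩ := ih (right_ne_zero_of_mul hj)
    exact ⟨_, .cons hkj hs⟩

end Evaluation

theorem monomials_congruent_mod_J_general
    (K : Type*) [Field K] {G : Type*} [Group G] [DecidableEq G] {n : ℕ}
    (g : Fin n → G) (hg : Function.Injective g)
    (m nn : FreeMonoid (G × ℕ))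
    (hexists : ∃ k l : Fin n,
      evalWord K g m k l = evalWord K g nn k l ∧ evalWord K g (n := n) m k l ≠ 0) :
    MonoidAlgebra.of K (FreeMonoid (G × ℕ)) m - MonoidAlgebra.of K (FreeMonoid (G × ℕ)) nn ∈
      idealSpan (genSet1 K G ∪ genSet2 K G ∪ genSet3 K g) := by
  obtain ⟨k, l, heq, hne⟩ := hexists
  obtain ⟨sm, hm⟩ := exists_isWalk_of_evalWord_apply_ne_zero (w := m.toList) hne
  obtain ⟨sn, hn⟩ := exists_isWalk_of_evalWord_apply_ne_zero (w := nn.toList) (heq ▸ hne)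
  obtain rfl : sm = sn := Multiset.toFinsupp.injective <|
    MvPolynomial.monomial_left_injective one_ne_zero <|
      (hm.evalWord_apply hg).symm.trans (heq.trans (hn.evalWord_apply hg))
  exact idealSpan_mono Set.subset_union_left (hm.ofWord_sub_mem hg hn)

/-- if two graded monomials have generic-matrix evaluations with the same
nonzero entry in the same position, then they are congruent modulo the `T_G`-ideal `J`
generated by the identities (1), (2), (3). -/
theorem monomials_congruent_mod_J
    (K : Type*) [Field K] [Infinite K] {G : Type*} [Group G] [DecidableEq G] {n : ℕ}
    (g : Fin n → G) (hg : Function.Injective g)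
    (m nn : FreeMonoid (G × ℕ))
    (hexists : ∃ k l : Fin n,
      evalWord K g m k l = evalWord K g nn k l ∧ evalWord K g (n := n) m k l ≠ 0) :
    MonoidAlgebra.of K (FreeMonoid (G × ℕ)) m - MonoidAlgebra.of K (FreeMonoid (G × ℕ)) nn ∈
      idealSpan (genSet1 K G ∪ genSet2 K G ∪ genSet3 K g) :=
  monomials_congruent_mod_J_general K g hg m nn hexists
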